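/- arXiv:1808.03056 — 2 statements merged into one kernel-verified Lean document; each statement's English description precedes it below -/
import Mathlib

section
/- Any two quasinilpotent elements a, b of a complex unital Banach algebra are quasinilpotent equivalent, i.e. ρ(a,b) = 0 and ρ(b,a) = 0. -/
/-- The iterated commutator `C_{a,b}^n` applied to `1`, where `C_{a,b}(x) = a*x - x*b`. -/
noncomputable def citer {A : Type*} [Ring A] (a b : A) (n : ℕ) : A :=
  (fun x => a * x - x * b)^[n] 1

/-- `ρ(a,b) = limsup_n ‖C_{a,b}^n(1)‖^{1/n}`. -/
noncomputable def rho {A : Type*} [NormedRing A] (a b : A) : ℝ :=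
  Filter.limsup (fun n : ℕ => ‖citer a b n‖ ^ ((n : ℝ)⁻¹)) Filter.atTop

/-
For quasinilpotent `a`, `b` we have `‖a ^ n‖ ≤ M δ ^ n` and `‖b ^ n‖ ≤ M' δ ^ n` for every `δ > 0`.
Since `C_{a,b}` is the sum of the commuting operators `x ↦ a x` and `x ↦ -x b`, the binomial
theorem gives `C_{a,b}^n(1) = ∑ₘ (n choose m) a ^ m (-b) ^ (n - m)`, whence
`‖C_{a,b}^n(1)‖ ≤ M M' (2δ) ^ n` and `ρ(a,b) ≤ 2δ`.
-/

open Finset Filter Topology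

theorem tendsto_rpow_inv_zero_iff {u : ℕ → ℝ} (hu : 0 ≤ u) :
    Tendsto (fun n : ℕ => u n ^ (n : ℝ)⁻¹) atTop (𝓝 0) ↔
      ∀ δ > 0, ∀ᶠ n in atTop, u n ≤ δ ^ n := by
  constructor
  · intro h δ hδ
    filter_upwards [(tendsto_order.1 h).2 δ hδ, eventually_ne_atTop 0] with n hn hn0
    rw [← Real.rpow_inv_natCast_pow (hu n) hn0]
    exact pow_le_pow_left₀ (Real.rpow_nonneg (hu n) _) hn.le n
  · intro h
    refine tendsto_order.2 ⟨fun ε hε => .of_forall fun n => hε.trans_le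
      (Real.rpow_nonneg (hu n) _), fun ε hε => ?_⟩
    filter_upwards [h (ε / 2) (by positivity), eventually_ne_atTop 0] with n hn hn0
    calc u n ^ (n : ℝ)⁻¹ ≤ ((ε / 2) ^ n) ^ (n : ℝ)⁻¹ :=
          Real.rpow_le_rpow (hu n) hn (by positivity)
      _ = ε / 2 := Real.pow_rpow_inv_natCast (by positivity) hn0
      _ < ε := half_lt_self hε

theorem exists_forall_le_mul_pow {u : ℕ → ℝ} (hu : 0 ≤ u) {δ : ℝ} (hδ : 0 < δ)
    (h : ∀ᶠ n in atTop, u n ≤ δ ^ n) : ∃ C, ∀ n, u n ≤ C * δ ^ n := by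
  have : u =O[atTop] (δ ^ ·) := Asymptotics.IsBigO.of_bound 1 <| h.mono fun n hn => by
    rwa [Real.norm_of_nonneg (hu n), Real.norm_of_nonneg (pow_pos hδ n).le, one_mul]
  obtain ⟨C, hC⟩ :=
    (Asymptotics.isBigO_nat_atTop_iff fun n h => absurd h (pow_ne_zero n hδ.ne')).1 this
  exact ⟨C, fun n => by simpa [abs_of_pos hδ] using (le_abs_self _).trans (hC n)⟩

theorem citer_eq_sum {A : Type*} [Ring A] (a b : A) (n : ℕ) :
    citer a b n = ∑ m ∈ antidiagonal n, n.choose m.1 • (a ^ m.1 * (-b) ^ m.2) := by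
  have hpow : citer a b n = ((LinearMap.mulLeft ℤ a + LinearMap.mulRight ℤ (-b)) ^ n) 1 := by
    induction n with
    | zero => rfl
    | succ n ih =>
      rw [citer, Function.iterate_succ_apply', ← citer, ih, pow_succ', Module.End.mul_apply]
      simp [sub_eq_add_neg]
  rw [hpow, (LinearMap.commute_mulLeft_right a (-b)).add_pow', LinearMap.sum_apply]
  simp

theorem norm_neg_pow {A : Type*} [NormedRing A] (b : A) (n : ℕ) : ‖(-b) ^ n‖ = ‖b ^ n‖ := by
  rcases neg_one_pow_eq_or A n with h | h <;> simp [neg_pow, h]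

theorem norm_citer_le {A : Type*} [NormedRing A] (a b : A) (n : ℕ) :
    ‖citer a b n‖ ≤ ∑ m ∈ antidiagonal n, n.choose m.1 * (‖a ^ m.1‖ * ‖b ^ m.2‖) := by
  rw [citer_eq_sum]
  refine (norm_sum_le _ _).trans (sum_le_sum fun m _ => ?_)
  grw [norm_nsmul_le, norm_mul_le, norm_neg_pow]

theorem tendsto_binomial_sum_rpow_inv_zero {p q : ℕ → ℝ} (hp : 0 ≤ p) (hq : 0 ≤ q)
    (hp0 : Tendsto (fun n : ℕ => p n ^ (n : ℝ)⁻¹) atTop (𝓝 0))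
    (hq0 : Tendsto (fun n : ℕ => q n ^ (n : ℝ)⁻¹) atTop (𝓝 0)) :
    Tendsto (fun n : ℕ => (∑ m ∈ antidiagonal n, n.choose m.1 * (p m.1 * q m.2)) ^ (n : ℝ)⁻¹)
      atTop (𝓝 0) := by
  rw [tendsto_rpow_inv_zero_iff hp] at hp0
  rw [tendsto_rpow_inv_zero_iff hq] at hq0
  rw [tendsto_rpow_inv_zero_iff fun n => sum_nonneg fun m _ =>
    mul_nonneg (Nat.cast_nonneg _) (mul_nonneg (hp _) (hq _))]
  intro δ hδ
  obtain ⟨C, hC⟩ := exists_forall_le_mul_pow hp (by positivity) (hp0 (δ / 4) (by positivity))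
  obtain ⟨D, hD⟩ := exists_forall_le_mul_pow hq (by positivity) (hq0 (δ / 4) (by positivity))
  filter_upwards [(tendsto_pow_atTop_atTop_of_one_lt one_lt_two).eventually_ge_atTop (C * D)]
    with n hn
  calc ∑ m ∈ antidiagonal n, n.choose m.1 * (p m.1 * q m.2)
      ≤ ∑ m ∈ antidiagonal n, n.choose m.1 * (C * (δ / 4) ^ m.1 * (D * (δ / 4) ^ m.2)) := by
        refine sum_le_sum fun m _ => mul_le_mul_of_nonneg_left ?_ (Nat.cast_nonneg _)
        exact mul_le_mul (hC _) (hD _) (hq _) ((hp _).trans (hC _))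
    _ = C * D * (δ / 4 + δ / 4) ^ n := by
        rw [(Commute.all _ _).add_pow', mul_sum]
        refine sum_congr rfl fun m _ => ?_
        rw [nsmul_eq_mul]
        ring
    _ = C * D * (δ / 2) ^ n := by ring
    _ ≤ 2 ^ n * (δ / 2) ^ n := by gcongr
    _ = δ ^ n := by rw [← mul_pow]; ring

theorem rho_eq_zero_of_tendsto {A : Type*} [NormedRing A] {a b : A}
    (ha : Tendsto (fun n : ℕ => ‖a ^ n‖ ^ (n : ℝ)⁻¹) atTop (𝓝 0))
    (hb : Tendsto (fun n : ℕ => ‖b ^ n‖ ^ (n : ℝ)⁻¹) atTop (𝓝 0)) :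
    rho a b = 0 := by
  refine Tendsto.limsup_eq (squeeze_zero (fun n => Real.rpow_nonneg (norm_nonneg _) _)
    (fun n => ?_) (tendsto_binomial_sum_rpow_inv_zero (fun n => norm_nonneg (a ^ n))
      (fun n => norm_nonneg (b ^ n)) ha hb))
  exact Real.rpow_le_rpow (norm_nonneg _) (norm_citer_le a b n) (by positivity)

theorem tendsto_norm_pow_rpow_inv_of_spectralRadius_eq_zero {A : Type*} [NormedRing A]
    [NormedAlgebra ℂ A] [CompleteSpace A] {a : A} (ha : spectralRadius ℂ a = 0) :
    Tendsto (fun n : ℕ => ‖a ^ n‖ ^ (n : ℝ)⁻¹) atTop (𝓝 0) := by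
  have h := spectrum.pow_norm_pow_one_div_tendsto_nhds_spectralRadius a
  rw [ha] at h
  simpa [one_div, Function.comp_def, ENNReal.toReal_ofReal (Real.rpow_nonneg (norm_nonneg _) _)]
    using (ENNReal.tendsto_toReal ENNReal.zero_ne_top).comp h

/-- Any two quasinilpotent elements are quasinilpotent equivalent. -/
theorem stmt_3 {A : Type*} [NormedRing A] [NormedAlgebra ℂ A] [CompleteSpace A]
    (a b : A) (ha : spectralRadius ℂ a = 0) (hb : spectralRadius ℂ b = 0) :
    rho a b = 0 ∧ rho b a = 0 := by
  have ha' := tendsto_norm_pow_rpow_inv_of_spectralRadius_eq_zero ha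
  have hb' := tendsto_norm_pow_rpow_inv_of_spectralRadius_eq_zero hb
  exact ⟨rho_eq_zero_of_tendsto ha' hb', rho_eq_zero_of_tendsto hb' ha'⟩
end

section
/- If p and q are idempotents in a complex unital Banach algebra with ρ(p,q) = 0, then p = q. In fact, for every odd natural number n one has ‖C_{p,q}^n(1)‖ = ‖p - q‖. -/
lemma citer_succ {A : Type*} [Ring A] (a b : A) (n : ℕ) :
    citer a b (n + 1) = a * citer a b n - citer a b n * b := by
  unfold citer
  rw [Function.iterate_succ_apply']

lemma citer_odd {A : Type*} [Ring A] (p q : A) (hp : p * p = p) (hq : q * q = q) :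
    ∀ k : ℕ, citer p q (2 * k + 1) = p - q := by
  intro k
  induction k with
  | zero => simp [citer]
  | succ k ih =>
    have h1 : 2 * (k + 1) + 1 = (2 * k + 1) + 1 + 1 := by ring
    rw [h1, citer_succ, citer_succ, ih]
    simp only [mul_sub, sub_mul, mul_assoc, hp, hq]
    simp only [← mul_assoc, hp, hq]
    abel

/-- For idempotents p, q: ‖C_{p,q}^n(1)‖ = ‖p - q‖ for odd n, and ρ(p,q) = 0 implies p = q. -/
theorem stmt_4 {A : Type*} [NormedRing A] [NormedAlgebra ℂ A]
    (p q : A) (hp : p * p = p) (hq : q * q = q) :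
    (∀ n : ℕ, Odd n → ‖citer p q n‖ = ‖p - q‖) ∧ (rho p q = 0 → p = q) := by
  have hodd : ∀ n : ℕ, Odd n → citer p q n = p - q := by
    rintro n ⟨k, rfl⟩
    exact citer_odd p q hp hq k
  refine ⟨fun n hn => by rw [hodd n hn], fun hr => ?_⟩
  by_contra hne
  have hc : 0 < ‖p - q‖ := by
    rw [norm_pos_iff]
    exact sub_ne_zero.mpr hne
  set c := ‖p - q‖ with hcdef
  set f : ℕ → ℝ := fun n : ℕ => ‖citer p q n‖ ^ ((n : ℝ)⁻¹) with hf
  -- boundedness: citer is eventually 2-periodic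
  have hval : ∀ n : ℕ, ‖citer p q n‖ ≤ max ‖(1 : A)‖ (max c ‖citer p q 2‖) := by
    intro n
    rcases Nat.even_or_odd n with ⟨m, rfl⟩ | hn
    · rcases m with _ | j
      · exact le_max_of_le_left le_rfl
      · have : j + 1 + (j + 1) = (2 * j + 1) + 1 := by ring
        rw [this, citer_succ, citer_odd p q hp hq]
        have h2 : citer p q 2 = p * (p - q) - (p - q) * q := by
          have : (2 : ℕ) = 1 + 1 := rfl
          rw [this, citer_succ]
          congr 1 <;> rw [citer_odd p q hp hq 0]
        rw [← h2]
        exact le_max_of_le_right (le_max_right _ _)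
    · rw [hodd _ hn]
      exact le_max_of_le_right (le_max_left _ _)
  set K : ℝ := max 1 (max ‖(1 : A)‖ (max c ‖citer p q 2‖)) with hK
  have hK1 : 1 ≤ K := le_max_left _ _
  have hbdd : Filter.IsBoundedUnder (· ≤ ·) Filter.atTop f := by
    refine ⟨K, Filter.eventually_map.mpr ?_⟩
    filter_upwards [Filter.eventually_ge_atTop 1] with n hn
    have hn0 : (0 : ℝ) < (n : ℝ) := by exact_mod_cast hn
    have hinv1 : ((n : ℝ))⁻¹ ≤ 1 := by
      rw [inv_le_one_iff₀]; right; exact_mod_cast hn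
    have hinv0 : (0 : ℝ) ≤ ((n : ℝ))⁻¹ := by positivity
    calc f n ≤ K ^ ((n : ℝ)⁻¹) := by
          apply Real.rpow_le_rpow (norm_nonneg _)
          · exact le_trans (hval n) (le_max_right _ _)
          · exact hinv0
      _ ≤ K ^ (1 : ℝ) := Real.rpow_le_rpow_of_exponent_le hK1 hinv1
      _ = K := Real.rpow_one K
  -- frequently f n ≥ min c 1
  have hfreq : ∃ᶠ n in Filter.atTop, min c 1 ≤ f n := by
    rw [Filter.frequently_atTop]
    intro a
    refine ⟨2 * a + 1, by omega, ?_⟩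
    have hno : Odd (2 * a + 1) := ⟨a, by ring⟩
    have : f (2 * a + 1) = c ^ (((2 * a + 1 : ℕ) : ℝ))⁻¹ := by
      simp only [hf]
      rw [hodd _ hno]
    rw [this]
    set t : ℝ := (((2 * a + 1 : ℕ) : ℝ))⁻¹ with ht
    have ht0 : 0 < t := by positivity
    have ht1 : t ≤ 1 := by
      rw [ht, inv_le_one_iff₀]; right
      exact_mod_cast Nat.one_le_iff_ne_zero.mpr (by omega)
    rcases le_or_gt 1 c with h1 | h1
    · exact le_trans (min_le_right _ _) (Real.one_le_rpow h1 ht0.le)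
    · refine le_trans (min_le_left _ _) ?_
      calc c = c ^ (1 : ℝ) := (Real.rpow_one c).symm
        _ ≤ c ^ t := Real.rpow_le_rpow_of_exponent_ge hc h1.le ht1
  have hle : min c 1 ≤ rho p q := Filter.le_limsup_of_frequently_le hfreq hbdd
  rw [hr] at hle
  have : 0 < min c 1 := lt_min hc one_pos
  linarith
end
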